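/- For all natural numbers k: 2^k · Σ_{j=0}^{k} C(2k,2j) · 2^j · (2j-1)!! · (2k-2j-1)!! = (2k)! · 3^k / k!. -/
import Mathlib


open Finset

lemma df_nat (j : ℕ) :
    2 ^ j * j.factorial * Nat.doubleFactorial (2 * j - 1) = (2 * j).factorial := by
  induction j with
  | zero => simp [Nat.doubleFactorial]
  | succ n ih =>
    have h1 : 2 * (n + 1) - 1 = 2 * n + 1 := by omega
    have h2 : 2 * (n + 1) = 2 * n + 2 := by omega
    have hdf : Nat.doubleFactorial (2 * n + 1)
        = (2 * n + 1) * Nat.doubleFactorial (2 * n - 1) := by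
      cases n with
      | zero => simp [Nat.doubleFactorial]
      | succ m =>
        have : 2 * (m + 1) + 1 = (2 * m + 1) + 2 := by omega
        rw [this, Nat.doubleFactorial_add_two]
        congr 1 <;> omega
    rw [h1, h2, hdf]
    have hfac : (2 * n + 2).factorial = (2 * n + 2) * ((2 * n + 1) * (2 * n).factorial) := by
      rw [show 2 * n + 2 = (2 * n + 1) + 1 from rfl, Nat.factorial_succ, Nat.factorial_succ]
    rw [hfac, ← ih, Nat.factorial_succ]
    ring

lemma key_nat (k j : ℕ) (h : j ≤ k) :
    k.factorial * (2 ^ k * ((2 * k).choose (2 * j) * 2 ^ j *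
      Nat.doubleFactorial (2 * j - 1) * Nat.doubleFactorial (2 * k - 2 * j - 1)))
      = (2 * k).factorial * (k.choose j * 2 ^ j) := by
  have e1 : 2 * k - 2 * j - 1 = 2 * (k - j) - 1 := by omega
  have e2 : 2 * k - 2 * j = 2 * (k - j) := by omega
  have h2 : 2 * j ≤ 2 * k := by omega
  have h2k := Nat.choose_mul_factorial_mul_factorial h2
  rw [e2] at h2k
  have hk := Nat.choose_mul_factorial_mul_factorial h
  have hpow : 2 ^ k = 2 ^ j * 2 ^ (k - j) := by
    rw [← pow_add]; congr 1; omega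
  rw [e1, ← hk, ← h2k, ← df_nat j, ← df_nat (k - j), hpow]
  ring

theorem stmt_6 (k : ℕ) :
    (2 ^ k : ℚ) *
        ∑ j ∈ range (k + 1),
          ((2 * k).choose (2 * j) : ℚ) * 2 ^ j * (Nat.doubleFactorial (2 * j - 1) : ℚ) *
            (Nat.doubleFactorial (2 * k - 2 * j - 1) : ℚ) =
      ((2 * k).factorial : ℚ) * 3 ^ k / (k.factorial : ℚ) := by
  rw [eq_div_iff (by exact_mod_cast Nat.factorial_ne_zero k)]
  have h3 : ((2 * k).factorial : ℚ) * 3 ^ k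
      = ∑ j ∈ range (k + 1), ((2 * k).factorial : ℚ) * ((k.choose j : ℚ) * 2 ^ j) := by
    rw [← mul_sum]
    congr 1
    have := add_pow (2 : ℚ) 1 k
    norm_num at this
    rw [this]
    exact Finset.sum_congr rfl fun j _ => by ring
  rw [h3, mul_comm, mul_sum, mul_sum]
  refine Finset.sum_congr rfl fun j hj => ?_
  have hjk : j ≤ k := by
    have := Finset.mem_range.mp hj; omega
  have := key_nat k j hjk
  have := congrArg (fun n : ℕ => (n : ℚ)) this
  push_cast at this
  linarith [this]
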